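/- (McDiarmid's bounded differences inequality) Let X_1,...,X_n be independent random variables with values in a set A, and let f : A^n → ℝ satisfy |f(t) - f(t')| ≤ ε_k whenever t, t' differ only in the k-th coordinate. Then for every l > 0: P(|f(X_1,...,X_n) - E[f(X_1,...,X_n)]| ≥ l) ≤ 2 exp(-2l² / ∑_k ε_k²). -/

import Mathlib

/-!
Integrating out the first coordinate, `g z = ∫ f (a, z) dν₀(a)`, splits `f - E f` into `f - g`,
which for each fixed `z` ranges over an interval of length `ε₀` and is therefore
`ε₀² / 4`-sub-Gaussian by Hoeffding's lemma, and `g - E g`, which has bounded differences in the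
remaining coordinates and is handled by induction. By Fubini the sub-Gaussian parameters add up
along this decomposition, so under the product law of the `X k` the centred `f` is
`(∑ k, ε k ² / 4)`-sub-Gaussian, and the Chernoff bound on both tails gives the inequality.
-/

open MeasureTheory ProbabilityTheory Real
open scoped NNReal

lemma mem_Icc_iInf_add_of_abs_sub_le {ι : Type*} [Nonempty ι] {h : ι → ℝ} {C : ℝ}
    (hC : ∀ i j, |h i - h j| ≤ C) (i : ι) :
    h i ∈ Set.Icc (⨅ j, h j) ((⨅ j, h j) + C) := by
  have hbdd : BddBelow (Set.range h) :=
    ⟨h i - C, Set.forall_mem_range.2 fun j => by linarith [(abs_le.1 (hC i j)).2]⟩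
  refine ⟨ciInf_le hbdd i, ?_⟩
  have : h i - C ≤ ⨅ j, h j := le_ciInf fun j => by linarith [(abs_le.1 (hC i j)).2]
  linarith

lemma Fin.measurable_insertNth_left {n : ℕ} {A : Type*} [MeasurableSpace A] (i : Fin (n + 1))
    (z : Fin n → A) : Measurable fun a : A => (i.insertNth a z : Fin (n + 1) → A) :=
  (MeasurableEquiv.piFinSuccAbove (fun _ => A) i).symm.measurable.comp measurable_prodMk_right

namespace ProbabilityTheory.HasSubgaussianMGF

lemma measure_abs_ge_le {Ω : Type*} [MeasurableSpace Ω] {μ : Measure Ω} [IsFiniteMeasure μ]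
    {X : Ω → ℝ} {c : ℝ≥0} (h : HasSubgaussianMGF X c μ) {ε : ℝ} (hε : 0 ≤ ε) :
    μ {ω | ε ≤ |X ω|} ≤ ENNReal.ofReal (2 * exp (-ε ^ 2 / (2 * c))) := by
  have tail : ∀ {Y : Ω → ℝ}, HasSubgaussianMGF Y c μ →
      μ {ω | ε ≤ Y ω} ≤ ENNReal.ofReal (exp (-ε ^ 2 / (2 * c))) := fun hY =>
    (ENNReal.le_ofReal_iff_toReal_le (measure_ne_top _ _) (exp_pos _).le).2
      (hY.measure_ge_le hε)
  calc μ {ω | ε ≤ |X ω|} ≤ μ ({ω | ε ≤ X ω} ∪ {ω | ε ≤ (-X) ω}) :=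
        measure_mono fun ω (hω : ε ≤ |X ω|) => le_abs.1 hω
    _ ≤ μ {ω | ε ≤ X ω} + μ {ω | ε ≤ (-X) ω} := measure_union_le _ _
    _ ≤ ENNReal.ofReal (exp (-ε ^ 2 / (2 * c))) + ENNReal.ofReal (exp (-ε ^ 2 / (2 * c))) :=
      add_le_add (tail h) (tail h.neg)
    _ = ENNReal.ofReal (2 * exp (-ε ^ 2 / (2 * c))) := by
        rw [← ENNReal.ofReal_add (exp_pos _).le (exp_pos _).le, ← two_mul]

lemma prod_of_forall_sub {α β : Type*} [MeasurableSpace α] [MeasurableSpace β] {μ : Measure α}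
    {ν : Measure β} [SFinite μ] [SFinite ν] {F : α × β → ℝ} {G : β → ℝ} {c d : ℝ≥0}
    (hF : Measurable F) (hsec : ∀ b, HasSubgaussianMGF (fun a => F (a, b) - G b) c μ)
    (hG : HasSubgaussianMGF G d ν) :
    HasSubgaussianMGF F (c + d) (μ.prod ν) := by
  have hsplit : ∀ t b a, exp (t * F (a, b)) = exp (t * G b) * exp (t * (F (a, b) - G b)) :=
    fun t b a => by rw [← exp_add]; ring_nf
  have hsection : ∀ t b, ∫ a, exp (t * F (a, b)) ∂μ ≤ exp (c * t ^ 2 / 2) * exp (t * G b) := by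
    intro t b
    simp_rw [hsplit t b, integral_const_mul, mul_comm (exp (c * t ^ 2 / 2))]
    gcongr
    exact (hsec b).mgf_le t
  have hint : ∀ t, Integrable (fun p => exp (t * F p)) (μ.prod ν) := by
    intro t
    have hmeas : Measurable fun p => exp (t * F p) := by fun_prop
    refine (integrable_prod_iff' hmeas.aestronglyMeasurable).2 ⟨ae_of_all _ fun b => ?_, ?_⟩
    · simp_rw [hsplit t b]
      exact ((hsec b).integrable_exp_mul t).const_mul _
    · refine ((hG.integrable_exp_mul t).const_mul (exp (c * t ^ 2 / 2))).mono'
        hmeas.norm.stronglyMeasurable.integral_prod_left'.aestronglyMeasurable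
        (ae_of_all _ fun b => ?_)
      simp_rw [norm_eq_abs, abs_exp]
      rw [abs_of_nonneg (integral_nonneg fun _ => (exp_pos _).le)]
      exact hsection t b
  refine ⟨hint, fun t => ?_⟩
  calc mgf F (μ.prod ν) t = ∫ b, ∫ a, exp (t * F (a, b)) ∂μ ∂ν :=
        integral_prod_symm _ (hint t)
    _ ≤ ∫ b, exp (c * t ^ 2 / 2) * exp (t * G b) ∂ν :=
        integral_mono (hint t).integral_prod_right ((hG.integrable_exp_mul t).const_mul _)
          (hsection t)
    _ = exp (c * t ^ 2 / 2) * mgf G ν t := integral_const_mul _ _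
    _ ≤ exp (c * t ^ 2 / 2) * exp (d * t ^ 2 / 2) := by gcongr; exact hG.mgf_le t
    _ = exp (↑(c + d) * t ^ 2 / 2) := by rw [← exp_add]; push_cast; ring_nf

end ProbabilityTheory.HasSubgaussianMGF

def HasBoundedDifferences {ι A : Type*} (f : (ι → A) → ℝ) (c : ι → ℝ) : Prop :=
  ∀ (t t' : ι → A) (k : ι), (∀ j, j ≠ k → t j = t' j) → |f t - f t'| ≤ c k

namespace HasBoundedDifferences

lemma integral {α ι A : Type*} [MeasurableSpace α] {μ : Measure α} [IsProbabilityMeasure μ]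
    {F : α → (ι → A) → ℝ} {c : ι → ℝ} (hF : ∀ a, HasBoundedDifferences (F a) c)
    (hint : ∀ z, Integrable (fun a => F a z) μ) :
    HasBoundedDifferences (fun z => ∫ a, F a z ∂μ) c := by
  intro z z' k hzz
  rw [← integral_sub (hint z) (hint z')]
  simpa using norm_integral_le_of_norm_le_const (μ := μ)
    (ae_of_all _ fun a => (norm_eq_abs _).trans_le (hF a z z' k hzz))

section insertNth

variable {n : ℕ} {A : Type*} {f : (Fin (n + 1) → A) → ℝ} {c : Fin (n + 1) → ℝ}

lemma abs_sub_insertNth_le (h : HasBoundedDifferences f c) (i : Fin (n + 1)) (z : Fin n → A)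
    (a a' : A) : |f (i.insertNth a z) - f (i.insertNth a' z)| ≤ c i :=
  h _ _ i fun j hj => by
    obtain ⟨j, rfl⟩ := Fin.exists_succAbove_eq hj
    simp

lemma comp_insertNth (h : HasBoundedDifferences f c) (i : Fin (n + 1)) (a : A) :
    HasBoundedDifferences (fun z => f (i.insertNth a z)) (fun j => c (i.succAbove j)) := by
  intro z z' k hzz
  refine h _ _ (i.succAbove k) fun j hj => ?_
  rcases i.eq_self_or_eq_succAbove j with rfl | ⟨j, rfl⟩
  · simp
  · simpa using hzz j (by rintro rfl; exact hj rfl)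

variable [MeasurableSpace A] {μ : Measure A} [IsProbabilityMeasure μ]

lemma integrable_comp_insertNth (h : HasBoundedDifferences f c) (hf : Measurable f)
    (i : Fin (n + 1)) (z : Fin n → A) : Integrable (fun a => f (i.insertNth a z)) μ := by
  have := nonempty_of_isProbabilityMeasure μ
  exact .of_mem_Icc _ _ (hf.comp (Fin.measurable_insertNth_left i z)).aemeasurable
    (ae_of_all _ (mem_Icc_iInf_add_of_abs_sub_le (h.abs_sub_insertNth_le i z)))

lemma hasSubgaussianMGF_comp_insertNth_sub_integral (h : HasBoundedDifferences f c)
    (hf : Measurable f) (i : Fin (n + 1)) (z : Fin n → A) :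
    HasSubgaussianMGF (fun a => f (i.insertNth a z) - ∫ a', f (i.insertNth a' z) ∂μ)
      ((‖c i‖₊ / 2) ^ 2) μ := by
  have := nonempty_of_isProbabilityMeasure μ
  simpa using hasSubgaussianMGF_of_mem_Icc
    (hf.comp (Fin.measurable_insertNth_left i z)).aemeasurable
    (ae_of_all _ (mem_Icc_iInf_add_of_abs_sub_le (h.abs_sub_insertNth_le i z)))

lemma integral_comp_insertNth (h : HasBoundedDifferences f c) (hf : Measurable f)
    (i : Fin (n + 1)) :
    HasBoundedDifferences (fun z => ∫ a, f (i.insertNth a z) ∂μ) (fun j => c (i.succAbove j)) :=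
  .integral (fun a => h.comp_insertNth i a) (h.integrable_comp_insertNth hf i)

end insertNth

theorem hasSubgaussianMGF_pi {A : Type*} [MeasurableSpace A] {n : ℕ}
    {f : (Fin n → A) → ℝ} {c : Fin n → ℝ} (h : HasBoundedDifferences f c) (hf : Measurable f)
    (ν : Fin n → Measure A) [∀ i, IsProbabilityMeasure (ν i)] :
    HasSubgaussianMGF (fun y => f y - ∫ y, f y ∂Measure.pi ν) (∑ k, (‖c k‖₊ / 2) ^ 2)
      (Measure.pi ν) := by
  induction n with
  | zero =>
    have hconst : (fun y => f y - ∫ y, f y ∂Measure.pi ν) = 0 := by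
      funext y
      simp [integral_unique, Unique.eq_default y]
    simp [hconst]
  | succ n ih =>
    set e := MeasurableEquiv.piFinSuccAbove (fun _ => A) 0
    set ν' := fun j => ν (Fin.succAbove 0 j)
    have he : (Measure.pi ν).map e = (ν 0).prod (Measure.pi ν') :=
      (measurePreserving_piFinSuccAbove ν 0).map_eq
    set F := fun p : A × (Fin n → A) => f (Fin.insertNth 0 p.1 p.2)
    have hF : Measurable F := hf.comp e.symm.measurable
    set g := fun z => ∫ a, F (a, z) ∂ν 0
    have hprod := HasSubgaussianMGF.prod_of_forall_sub
      (F := fun p => F p - ∫ z, g z ∂Measure.pi ν') (hF.sub_const _)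
      (fun z => (h.hasSubgaussianMGF_comp_insertNth_sub_integral hf 0 z).congr
        (ae_of_all _ fun a => by ring))
      (ih (h.integral_comp_insertNth hf 0)
        hF.stronglyMeasurable.integral_prod_left'.measurable ν')
    have hmean : ∫ z, g z ∂Measure.pi ν' = ∫ y, f y ∂Measure.pi ν := by
      have hint : Integrable F ((ν 0).prod (Measure.pi ν')) :=
        (hprod.integrable.add (integrable_const _)).congr
          (ae_of_all _ fun p => sub_add_cancel _ _)
      rw [← integral_prod_symm _ hint, ← he, integral_map_equiv]
      simp [e, F]
    rw [← he] at hprod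
    convert hprod.of_map e.measurable.aemeasurable using 1
    · funext y
      simp [e, F, hmean]
    · rw [Fin.sum_univ_succAbove _ 0]

end HasBoundedDifferences

theorem mcdiarmid_bounded_differences_general
    {Ω : Type*} [MeasurableSpace Ω] (μ : Measure Ω) [IsProbabilityMeasure μ]
    {A : Type*} [mA : MeasurableSpace A] (n : ℕ)
    (X : Fin n → Ω → A) (hXmeas : ∀ k, Measurable (X k))
    (hXindep : iIndepFun X μ)
    (f : (Fin n → A) → ℝ) (hfmeas : Measurable f)
    (ε : Fin n → ℝ)
    (hbd : ∀ (t t' : Fin n → A) (k : Fin n),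
      (∀ j, j ≠ k → t j = t' j) → |f t - f t'| ≤ ε k)
    (l : ℝ) (hl : 0 < l) :
    μ {ω | l ≤ |f (fun k => X k ω) - ∫ ω', f (fun k => X k ω') ∂μ|}
      ≤ ENNReal.ofReal (2 * Real.exp (-2 * l ^ 2 / ∑ k, ε k ^ 2)) := by
  have : ∀ k, IsProbabilityMeasure (μ.map (X k)) := fun k =>
    Measure.isProbabilityMeasure_map (hXmeas k).aemeasurable
  have hT : Measurable fun ω k => X k ω := measurable_pi_lambda _ hXmeas
  have hlaw := hXindep.map_fun_eq_pi_map fun k => (hXmeas k).aemeasurable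
  have hsub := HasBoundedDifferences.hasSubgaussianMGF_pi hbd hfmeas fun k => μ.map (X k)
  rw [← hlaw, integral_map hT.aemeasurable hfmeas.aestronglyMeasurable] at hsub
  have hvar : 2 * ((∑ k, (‖ε k‖₊ / 2) ^ 2 : ℝ≥0) : ℝ) = (∑ k, ε k ^ 2) / 2 := by
    push_cast
    simp only [norm_eq_abs, div_pow, sq_abs, ← Finset.sum_div]
    ring
  refine ((hsub.of_map hT.aemeasurable).measure_abs_ge_le hl.le).trans_eq ?_
  rw [hvar]
  ring_nf

/-- McDiarmid's bounded differences inequality: if `X 1, ..., X n` are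
independent random variables with values in `A` and `f : A^n → ℝ` changes by
at most `ε k` when only the `k`-th coordinate changes, then for every `l > 0`,
`P(|f(X) - E[f(X)]| ≥ l) ≤ 2 exp (-2 l^2 / ∑ k, ε k ^ 2)`. -/
theorem mcdiarmid_bounded_differences
    {Ω : Type*} [MeasurableSpace Ω] (μ : Measure Ω) [IsProbabilityMeasure μ]
    {A : Type*} [mA : MeasurableSpace A] (n : ℕ)
    (X : Fin n → Ω → A) (hXmeas : ∀ k, Measurable (X k))
    (hXindep : iIndepFun X μ)
    (f : (Fin n → A) → ℝ) (hfmeas : Measurable f)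
    (ε : Fin n → ℝ) (hε : ∀ k, 0 < ε k)
    (hbd : ∀ (t t' : Fin n → A) (k : Fin n),
      (∀ j, j ≠ k → t j = t' j) → |f t - f t'| ≤ ε k)
    (l : ℝ) (hl : 0 < l) :
    μ {ω | l ≤ |f (fun k => X k ω) - ∫ ω', f (fun k => X k ω') ∂μ|}
      ≤ ENNReal.ofReal (2 * Real.exp (-2 * l ^ 2 / ∑ k, ε k ^ 2)) :=
  mcdiarmid_bounded_differences_general μ (mA := mA) n X hXmeas hXindep f hfmeas ε hbd l hl
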